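/- arXiv:1801.06920 — 2 statements merged into one kernel-verified Lean document; each statement's English description precedes it below -/
import Mathlib

section
/- Let the target MDP have kernel P_T and the χ-pulled-back source MDP have kernel P_χ with ‖P_T(·|s,a) - P_χ(·|s,a)‖₁ ≤ δ for all (s,a), rewards matching under χ and bounded by R_max. Then executing the mapped source-optimal policy π(s) = π_S^*(χ(s)) in the target MDP yields V_T^π ≥ V_T^* - 2γδR_max/(1-γ)² pointwise. -/
open Finset

section Aux
variable {ι : Type*} [Fintype ι] [Nonempty ι]

private lemma my_abs_sup'_le (f : ι → ℝ) (C : ℝ) (h : ∀ i, |f i| ≤ C) :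
    |univ.sup' univ_nonempty f| ≤ C := by
  rw [abs_le]
  refine ⟨?_, sup'_le _ _ fun i _ => (abs_le.1 (h i)).2⟩
  obtain ⟨i⟩ := ‹Nonempty ι›
  exact le_trans (abs_le.1 (h i)).1 (le_sup' f (mem_univ i))

private lemma my_sup'_sub_sup' (f g : ι → ℝ) (C : ℝ) (h : ∀ i, |f i - g i| ≤ C) :
    |univ.sup' univ_nonempty f - univ.sup' univ_nonempty g| ≤ C := by
  rw [abs_sub_le_iff]
  constructor
  · rw [sub_le_iff_le_add]
    apply sup'_le
    intro i _
    have h2 := (abs_le.1 (h i)).2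
    have h3 := le_sup' g (mem_univ i)
    linarith
  · rw [sub_le_iff_le_add]
    apply sup'_le
    intro i _
    have h2 := (abs_le.1 (h i)).1
    have h3 := le_sup' f (mem_univ i)
    linarith

private lemma my_contract (f : ι → ℝ) (γ K : ℝ) (hγ0 : 0 ≤ γ) (hγ1 : γ < 1)
    (h : ∀ s, |f s| ≤ K + γ * univ.sup' univ_nonempty (fun t => |f t|)) :
    ∀ s, |f s| ≤ K / (1 - γ) := by
  set M := univ.sup' univ_nonempty (fun t => |f t|) with hM
  have hMle : M ≤ K + γ * M := sup'_le _ _ fun s _ => h s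
  have h1γ : 0 < 1 - γ := by linarith
  have hMK : M ≤ K / (1 - γ) := by
    rw [le_div_iff₀ h1γ]; nlinarith
  intro s
  exact le_trans (le_sup' (fun t => |f t|) (mem_univ s)) hMK

private lemma my_sum_mul_le (p f : ι → ℝ) (M : ℝ) (hp : ∀ i, 0 ≤ p i)
    (hsum : ∑ i, p i = 1) (hf : ∀ i, |f i| ≤ M) :
    |∑ i, p i * f i| ≤ M := by
  calc |∑ i, p i * f i| ≤ ∑ i, |p i * f i| := abs_sum_le_sum_abs _ _
    _ ≤ ∑ i, p i * M := by
        apply sum_le_sum; intro i _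
        rw [abs_mul, abs_of_nonneg (hp i)]
        exact mul_le_mul_of_nonneg_left (hf i) (hp i)
    _ = M := by rw [← sum_mul, hsum, one_mul]

end Aux

private lemma my_sum_est {ST SS : Type*} [Fintype ST] [Nonempty ST] [Fintype SS] (χ : ST ≃ SS)
    (p : ST → ℝ) (q : SS → ℝ) (W : ST → ℝ) (U : SS → ℝ) (δ MW MD : ℝ)
    (hp : ∀ s', 0 ≤ p s') (hq : ∀ s'', 0 ≤ q s'') (hqsum : ∑ s'', q s'' = 1)
    (hδ : ∑ s', |p s' - q (χ s')| ≤ δ)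
    (hW : ∀ s', |W s'| ≤ MW) (hD : ∀ s', |W s' - U (χ s')| ≤ MD) :
    |∑ s', p s' * W s' - ∑ s'', q s'' * U s''| ≤ δ * MW + MD := by
  have hMW : 0 ≤ MW := le_trans (abs_nonneg _) (hW (Classical.arbitrary ST))
  have hrw : ∑ s'', q s'' * U s'' = ∑ s', q (χ s') * U (χ s') :=
    (Equiv.sum_comp χ fun s'' => q s'' * U s'').symm
  have hq1 : (∑ s', q (χ s')) = 1 := by
    rw [Equiv.sum_comp χ q]; exact hqsum
  rw [hrw, ← Finset.sum_sub_distrib]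
  calc |∑ s', (p s' * W s' - q (χ s') * U (χ s'))|
      ≤ ∑ s', |p s' * W s' - q (χ s') * U (χ s')| := abs_sum_le_sum_abs _ _
    _ ≤ ∑ s', (|p s' - q (χ s')| * MW + q (χ s') * MD) := by
        apply sum_le_sum
        intro i _
        have he : p i * W i - q (χ i) * U (χ i)
            = (p i - q (χ i)) * W i + q (χ i) * (W i - U (χ i)) := by ring
        rw [he]
        refine le_trans (abs_add_le _ _) ?_
        rw [abs_mul, abs_mul, abs_of_nonneg (hq (χ i))]
        have h1 : |p i - q (χ i)| * |W i| ≤ |p i - q (χ i)| * MW :=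
          mul_le_mul_of_nonneg_left (hW i) (abs_nonneg _)
        have h2 : q (χ i) * |W i - U (χ i)| ≤ q (χ i) * MD :=
          mul_le_mul_of_nonneg_left (hD i) (hq (χ i))
        linarith
    _ = (∑ s', |p s' - q (χ s')|) * MW + MD := by
        rw [Finset.sum_add_distrib, ← Finset.sum_mul, ← Finset.sum_mul, hq1, one_mul]
    _ ≤ δ * MW + MD := by
        have := mul_le_mul_of_nonneg_right hδ hMW
        linarith

/-- the mapped source-optimal policy is 2γδR_max/(1-γ)²-optimal in
the target when the target kernel is δ-close to the pulled-back source kernel. -/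
theorem stmt_13 {ST SS A : Type*} [Fintype ST] [Fintype SS] [Fintype A] [Nonempty A]
    (χ : ST ≃ SS)
    (PS : SS → A → SS → ℝ) (RS : SS → A → ℝ) (γ Rmax δ : ℝ)
    (hγ0 : 0 ≤ γ) (hγ1 : γ < 1)
    (hPS : ∀ s a s', 0 ≤ PS s a s') (hPSsum : ∀ s a, ∑ s', PS s a s' = 1)
    (hRS : ∀ s a, |RS s a| ≤ Rmax)
    (PT : ST → A → ST → ℝ) (RT : ST → A → ℝ)
    (hPT0 : ∀ s a s', 0 ≤ PT s a s') (hPTsum : ∀ s a, ∑ s', PT s a s' = 1)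
    (hTV : ∀ (s : ST) (a : A), ∑ s', |PT s a s' - PS (χ s) a (χ s')| ≤ δ)
    (hRT : ∀ s a, RT s a = RS (χ s) a)
    (πS : SS → A) (VS : SS → ℝ)
    (hVS : ∀ s, VS s = RS s (πS s) + γ * ∑ s', PS s (πS s) s' * VS s')
    (VSstar : SS → ℝ)
    (hVSstar : ∀ s, VSstar s = Finset.univ.sup' Finset.univ_nonempty
      (fun a => RS s a + γ * ∑ s', PS s a s' * VSstar s'))
    (hopt : ∀ s, VS s = VSstar s)
    (π : ST → A) (hπ : ∀ s, π s = πS (χ s))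
    (Vπ : ST → ℝ)
    (hVπ : ∀ s, Vπ s = RT s (π s) + γ * ∑ s', PT s (π s) s' * Vπ s')
    (VTstar : ST → ℝ)
    (hVTstar : ∀ s, VTstar s = Finset.univ.sup' Finset.univ_nonempty
      (fun a => RT s a + γ * ∑ s', PT s a s' * VTstar s')) :
    ∀ s, VTstar s - 2 * γ * δ * Rmax / (1 - γ) ^ 2 ≤ Vπ s := by
  intro s0
  haveI : Nonempty ST := ⟨s0⟩
  haveI : Nonempty SS := ⟨χ s0⟩
  have h1γ : 0 < 1 - γ := by linarith
  have hδ0 : 0 ≤ δ :=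
    le_trans (Finset.sum_nonneg fun i _ => abs_nonneg _) (hTV s0 (Classical.arbitrary A))
  -- bound on Vπ
  have hVπb : ∀ s, |Vπ s| ≤ Rmax / (1 - γ) := by
    apply my_contract Vπ γ Rmax hγ0 hγ1
    intro s
    rw [hVπ s]
    refine le_trans (abs_add_le _ _) ?_
    rw [abs_mul, abs_of_nonneg hγ0]
    have h1 : |RT s (π s)| ≤ Rmax := by rw [hRT]; exact hRS _ _
    have h2 : |∑ s', PT s (π s) s' * Vπ s'| ≤ univ.sup' univ_nonempty (fun t => |Vπ t|) :=
      my_sum_mul_le _ _ _ (hPT0 s (π s)) (hPTsum s (π s))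
        (fun i => le_sup' (fun t => |Vπ t|) (mem_univ i))
    nlinarith
  -- bound on VTstar
  have hVTb : ∀ s, |VTstar s| ≤ Rmax / (1 - γ) := by
    apply my_contract VTstar γ Rmax hγ0 hγ1
    intro s
    rw [hVTstar s]
    apply my_abs_sup'_le
    intro a
    refine le_trans (abs_add_le _ _) ?_
    rw [abs_mul, abs_of_nonneg hγ0]
    have h1 : |RT s a| ≤ Rmax := by rw [hRT]; exact hRS _ _
    have h2 : |∑ s', PT s a s' * VTstar s'| ≤ univ.sup' univ_nonempty (fun t => |VTstar t|) :=
      my_sum_mul_le _ _ _ (hPT0 s a) (hPTsum s a)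
        (fun i => le_sup' (fun t => |VTstar t|) (mem_univ i))
    nlinarith
  set ε := γ * δ * (Rmax / (1 - γ)) with hε
  -- Claim A : executed value close to source value
  have hA : ∀ s, |Vπ s - VS (χ s)| ≤ ε / (1 - γ) := by
    refine my_contract (fun s => Vπ s - VS (χ s)) γ ε hγ0 hγ1 ?_
    intro s
    show |Vπ s - VS (χ s)| ≤
      ε + γ * univ.sup' univ_nonempty (fun t : ST => |Vπ t - VS (χ t)|)
    have h1 : Vπ s - VS (χ s)
        = γ * (∑ s', PT s (πS (χ s)) s' * Vπ s'
            - ∑ s'', PS (χ s) (πS (χ s)) s'' * VS s'') := by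
      rw [hVπ s, hVS (χ s), hRT, hπ s]; ring
    rw [h1, abs_mul, abs_of_nonneg hγ0]
    have key := my_sum_est χ (PT s (πS (χ s))) (PS (χ s) (πS (χ s))) Vπ VS δ
      (Rmax / (1 - γ)) (univ.sup' univ_nonempty (fun t : ST => |Vπ t - VS (χ t)|))
      (hPT0 s (πS (χ s))) (hPS (χ s) (πS (χ s))) (hPSsum (χ s) (πS (χ s)))
      (hTV s (πS (χ s))) hVπb
      (fun s' => le_sup' (fun t : ST => |Vπ t - VS (χ t)|) (mem_univ s'))
    have := mul_le_mul_of_nonneg_left key hγ0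
    rw [hε]; linarith [this]
  -- Claim B : optimal values close
  have hB : ∀ s, |VTstar s - VSstar (χ s)| ≤ ε / (1 - γ) := by
    refine my_contract (fun s => VTstar s - VSstar (χ s)) γ ε hγ0 hγ1 ?_
    intro s
    show |VTstar s - VSstar (χ s)| ≤
      ε + γ * univ.sup' univ_nonempty (fun t : ST => |VTstar t - VSstar (χ t)|)
    rw [hVTstar s, hVSstar (χ s)]
    refine le_trans (my_sup'_sub_sup' _ _
      (γ * (δ * (Rmax / (1 - γ)) +
        univ.sup' univ_nonempty (fun t : ST => |VTstar t - VSstar (χ t)|))) ?_)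
      (le_of_eq (by rw [hε]; ring))
    intro a
    have h1 : (RT s a + γ * ∑ s', PT s a s' * VTstar s')
        - (RS (χ s) a + γ * ∑ s'', PS (χ s) a s'' * VSstar s'')
        = γ * (∑ s', PT s a s' * VTstar s' - ∑ s'', PS (χ s) a s'' * VSstar s'') := by
      rw [hRT]; ring
    rw [h1, abs_mul, abs_of_nonneg hγ0]
    have key := my_sum_est χ (PT s a) (PS (χ s) a) VTstar VSstar δ
      (Rmax / (1 - γ)) (univ.sup' univ_nonempty (fun t : ST => |VTstar t - VSstar (χ t)|))
      (hPT0 s a) (hPS (χ s) a) (hPSsum (χ s) a) (hTV s a) hVTb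
      (fun s' => le_sup' (fun t : ST => |VTstar t - VSstar (χ t)|) (mem_univ s'))
    exact mul_le_mul_of_nonneg_left key hγ0
  -- combine
  have hAs := abs_le.1 (hA s0)
  have hBs := abs_le.1 (hB s0)
  have hne : (1 - γ) ≠ 0 := ne_of_gt h1γ
  have he : ε / (1 - γ) = γ * δ * Rmax / (1 - γ) ^ 2 := by
    rw [hε, sq, mul_div_assoc, div_div, mul_div_assoc]
  have hop := hopt (χ s0)
  have h2e : 2 * γ * δ * Rmax / (1 - γ) ^ 2 = 2 * (γ * δ * Rmax / (1 - γ) ^ 2) := by ring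
  linarith [hAs.1, hBs.2]
end

section
/- If two deterministic policies π₁, π₂ on a finite MDP agree at all states except possibly on a set D, and at states in D the action-value gap satisfies Q^{π₂}(s, π₁(s)) ≥ Q^{π₂}(s, π₂(s)) - ε, then V^{π₁}(s) ≥ V^{π₂}(s) - ε/(1-γ) for all states s. -/
/-- performance-difference style bound for locally ε-perturbed policies. -/
theorem stmt_16 {S A : Type*} [Fintype S] [Fintype A]
    (P : S → A → S → ℝ) (R : S → A → ℝ) (γ ε : ℝ)
    (hγ0 : 0 ≤ γ) (hγ1 : γ < 1) (hε : 0 ≤ ε)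
    (hP : ∀ s a s', 0 ≤ P s a s') (hPsum : ∀ s a, ∑ s', P s a s' = 1)
    (π₁ π₂ : S → A) (D : Set S) (hagree : ∀ s ∉ D, π₁ s = π₂ s)
    (V₁ V₂ : S → ℝ)
    (hV₁ : ∀ s, V₁ s = R s (π₁ s) + γ * ∑ s', P s (π₁ s) s' * V₁ s')
    (hV₂ : ∀ s, V₂ s = R s (π₂ s) + γ * ∑ s', P s (π₂ s) s' * V₂ s')
    (Q₂ : S → A → ℝ)
    (hQ₂ : ∀ s a, Q₂ s a = R s a + γ * ∑ s', P s a s' * V₂ s')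
    (hgap : ∀ s ∈ D, Q₂ s (π₂ s) - ε ≤ Q₂ s (π₁ s)) :
    ∀ s, V₂ s - ε / (1 - γ) ≤ V₁ s := by
  intro s
  obtain ⟨t, -, ht⟩ := Finset.exists_max_image Finset.univ (fun u => V₂ u - V₁ u)
    ⟨s, Finset.mem_univ s⟩
  simp only [Finset.mem_univ, forall_true_left, true_implies] at ht
  set M := V₂ t - V₁ t with hMdef
  have key : ∀ u, V₂ u - V₁ u ≤ ε + γ * M := by
    intro u
    have hVQ : V₂ u = Q₂ u (π₂ u) := by rw [hQ₂, hV₂]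
    have h1 : V₂ u - Q₂ u (π₁ u) ≤ ε := by
      by_cases hu : u ∈ D
      · have := hgap u hu; linarith [hVQ]
      · rw [hagree u hu, ← hVQ]; linarith
    have h2 : Q₂ u (π₁ u) - V₁ u = γ * ∑ s', P u (π₁ u) s' * (V₂ s' - V₁ s') := by
      rw [hQ₂, hV₁ u]
      rw [show ∀ x y r, (r + γ * x) - (r + γ * y) = γ * (x - y) from fun x y r => by ring]
      rw [← Finset.sum_sub_distrib]
      congr 1
      apply Finset.sum_congr rfl
      intro x _; ring
    have h3 : ∑ s', P u (π₁ u) s' * (V₂ s' - V₁ s') ≤ M := by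
      calc ∑ s', P u (π₁ u) s' * (V₂ s' - V₁ s')
          ≤ ∑ s', P u (π₁ u) s' * M := by
            apply Finset.sum_le_sum
            intro x _
            exact mul_le_mul_of_nonneg_left (ht x) (hP u (π₁ u) x)
        _ = M := by rw [← Finset.sum_mul, hPsum, one_mul]
    have h4 : γ * ∑ s', P u (π₁ u) s' * (V₂ s' - V₁ s') ≤ γ * M :=
      mul_le_mul_of_nonneg_left h3 hγ0
    linarith
  have hM : M ≤ ε / (1 - γ) := by
    rw [le_div_iff₀ (by linarith)]
    have := key t
    nlinarith
  have := ht s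
  linarith
end
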